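/- Let A be a real L×N matrix with full row rank, L₂ a real M₂×N matrix such that ker A ∩ ker L₂ = {0} and the orthogonal complement of ker A is invariant under L₂ᵀL₂, and λ₂ > 0. Define Λ₂ = (AAᵀ)⁻¹ A L₂ᵀL₂ Aᵀ. Then for any b ∈ ℝ^L, the vector x₂* = Aᵀ(AAᵀ + λ₂Λ₂)⁻¹ b is the unique minimizer over x₂ ∈ ℝ^N of ½‖b − Ax₂‖₂² + (λ₂/2)‖L₂x₂‖₂². -/
import Mathlib

open Matrix

private lemma dp_self_nonneg {n : ℕ} (v : Fin n → ℝ) : 0 ≤ v ⬝ᵥ v :=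
  Finset.sum_nonneg fun i _ => mul_self_nonneg _

/-- closed-form smooth component, item 3 of Theorem 1 of the paper.
Under Assumptions 1–3, with `Λ₂ = (AAᵀ)⁻¹ A L₂ᵀL₂ Aᵀ`, for any `b ∈ ℝ^L` the vector
`x₂* = Aᵀ(AAᵀ + λ₂Λ₂)⁻¹ b` is the unique minimizer of `½‖b − Ax₂‖₂² + (λ₂/2)‖L₂x₂‖₂²`. -/
theorem stmt10 {L N M₂ : ℕ} (A : Matrix (Fin L) (Fin N) ℝ) (L₂ : Matrix (Fin M₂) (Fin N) ℝ)
    (lam₂ : ℝ) (hlam₂ : 0 < lam₂)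
    (hA : IsUnit (A * Aᵀ))
    (hker : ∀ x : Fin N → ℝ, A.mulVec x = 0 → L₂.mulVec x = 0 → x = 0)
    (hinv : ∀ x : Fin N → ℝ,
      (∀ z : Fin N → ℝ, A.mulVec z = 0 → x ⬝ᵥ z = 0) →
      (∀ z : Fin N → ℝ, A.mulVec z = 0 → ((L₂ᵀ * L₂).mulVec x) ⬝ᵥ z = 0))
    (b : Fin L → ℝ)
    (Λ₂ : Matrix (Fin L) (Fin L) ℝ) (hΛ₂ : Λ₂ = (A * Aᵀ)⁻¹ * (A * L₂ᵀ * L₂ * Aᵀ))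
    (f : (Fin N → ℝ) → ℝ)
    (hf : ∀ x₂ : Fin N → ℝ, f x₂ =
      1 / 2 * ((b - A.mulVec x₂) ⬝ᵥ (b - A.mulVec x₂)) +
      lam₂ / 2 * (L₂.mulVec x₂ ⬝ᵥ L₂.mulVec x₂))
    (x₂star : Fin N → ℝ)
    (hx₂star : x₂star = Aᵀ.mulVec ((A * Aᵀ + lam₂ • Λ₂)⁻¹.mulVec b)) :
    (∀ x₂ : Fin N → ℝ, f x₂star ≤ f x₂) ∧
    (∀ x₂ : Fin N → ℝ, (∀ z : Fin N → ℝ, f x₂ ≤ f z) → x₂ = x₂star) := by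
  have hAdet : IsUnit (A * Aᵀ).det := (Matrix.isUnit_iff_isUnit_det _).mp hA
  have hAATinv : (A * Aᵀ) * (A * Aᵀ)⁻¹ = 1 := Matrix.mul_nonsing_inv _ hAdet
  have hinvAAT : (A * Aᵀ)⁻¹ * (A * Aᵀ) = 1 := Matrix.nonsing_inv_mul _ hAdet
  -- transpose dot product helper
  have hdp : ∀ (w : Fin L → ℝ) (z : Fin N → ℝ), Aᵀ.mulVec w ⬝ᵥ z = w ⬝ᵥ A.mulVec z := by
    intro w z
    rw [Matrix.mulVec_transpose, ← Matrix.dotProduct_mulVec]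
  have hdpL : ∀ (w : Fin M₂ → ℝ) (z : Fin N → ℝ), L₂ᵀ.mulVec w ⬝ᵥ z = w ⬝ᵥ L₂.mulVec z := by
    intro w z
    rw [Matrix.mulVec_transpose, ← Matrix.dotProduct_mulVec]
  -- any vector orthogonal to ker A: explicit projection formula
  have hproj : ∀ y : Fin N → ℝ, (∀ z : Fin N → ℝ, A.mulVec z = 0 → y ⬝ᵥ z = 0) →
      y = Aᵀ.mulVec ((A * Aᵀ)⁻¹.mulVec (A.mulVec y)) := by
    intro y hy
    set p := Aᵀ.mulVec ((A * Aᵀ)⁻¹.mulVec (A.mulVec y)) with hp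
    have hz : A.mulVec (y - p) = 0 := by
      rw [Matrix.mulVec_sub, hp, Matrix.mulVec_mulVec, Matrix.mulVec_mulVec,
        hAATinv, Matrix.one_mulVec, sub_self]
    have h3 : (y - p) ⬝ᵥ (y - p) = 0 := by
      rw [sub_dotProduct, hy _ hz, hp, hdp, hz, dotProduct_zero, sub_zero]
    exact sub_eq_zero.mp (dotProduct_self_eq_zero.mp h3)
  -- invariance: L₂ᵀL₂ Aᵀ w = Aᵀ (Λ₂ w)
  have hswap : ∀ w : Fin L → ℝ,
      (L₂ᵀ * L₂).mulVec (Aᵀ.mulVec w) = Aᵀ.mulVec (Λ₂.mulVec w) := by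
    intro w
    have horth : ∀ z : Fin N → ℝ, A.mulVec z = 0 → (Aᵀ.mulVec w) ⬝ᵥ z = 0 := by
      intro z hz; rw [hdp, hz, dotProduct_zero]
    have := hproj _ (hinv _ horth)
    rw [this]
    congr 1
    rw [hΛ₂]
    simp only [Matrix.mulVec_mulVec, Matrix.mul_assoc]
  set S : Matrix (Fin L) (Fin L) ℝ := A * Aᵀ + lam₂ • Λ₂ with hS
  set M : Matrix (Fin N) (Fin N) ℝ := Aᵀ * A + lam₂ • (L₂ᵀ * L₂) with hM
  -- M ∘ Aᵀ = Aᵀ ∘ S (as actions on vectors)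
  have hMS : ∀ w : Fin L → ℝ, M.mulVec (Aᵀ.mulVec w) = Aᵀ.mulVec (S.mulVec w) := by
    intro w
    rw [hM, hS, Matrix.add_mulVec, Matrix.add_mulVec, Matrix.mulVec_add,
      Matrix.smul_mulVec, Matrix.smul_mulVec, hswap, Matrix.mulVec_smul]
    congr 1
    rw [Matrix.mulVec_mulVec, Matrix.mulVec_mulVec, Matrix.mul_assoc]
  -- quadratic form of M
  have hquad : ∀ x : Fin N → ℝ, x ⬝ᵥ M.mulVec x
      = A.mulVec x ⬝ᵥ A.mulVec x + lam₂ * (L₂.mulVec x ⬝ᵥ L₂.mulVec x) := by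
    intro x
    rw [hM, Matrix.add_mulVec, dotProduct_add, Matrix.smul_mulVec, dotProduct_smul]
    congr 1
    · rw [← Matrix.mulVec_mulVec, dotProduct_comm, hdp]
    · rw [smul_eq_mul]
      congr 1
      rw [← Matrix.mulVec_mulVec, dotProduct_comm, hdpL]
  -- positive definiteness consequence: x ⬝ M x = 0 → x = 0
  have hposdef : ∀ x : Fin N → ℝ, x ⬝ᵥ M.mulVec x = 0 → x = 0 := by
    intro x hx
    rw [hquad] at hx
    have h1 : 0 ≤ A.mulVec x ⬝ᵥ A.mulVec x := dp_self_nonneg _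
    have h2 : 0 ≤ L₂.mulVec x ⬝ᵥ L₂.mulVec x := dp_self_nonneg _
    have hA0 : A.mulVec x ⬝ᵥ A.mulVec x = 0 := by nlinarith
    have hL0 : L₂.mulVec x ⬝ᵥ L₂.mulVec x = 0 := by nlinarith
    exact hker x (dotProduct_self_eq_zero.mp hA0) (dotProduct_self_eq_zero.mp hL0)
  -- S is invertible
  have hSinj0 : ∀ v : Fin L → ℝ, S.mulVec v = 0 → v = 0 := by
    intro v hv
    have hAv : Aᵀ.mulVec v = 0 := by
      apply hposdef
      rw [hMS, hv, Matrix.mulVec_zero, dotProduct_zero]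
    have h0 : (A * Aᵀ).mulVec v = 0 := by
      rw [← Matrix.mulVec_mulVec, hAv, Matrix.mulVec_zero]
    have h1 := congrArg ((A * Aᵀ)⁻¹).mulVec h0
    rwa [Matrix.mulVec_mulVec, hinvAAT, Matrix.one_mulVec, Matrix.mulVec_zero] at h1
  have hSunit : IsUnit S.det := by
    rw [← Matrix.isUnit_iff_isUnit_det, ← Matrix.mulVec_injective_iff_isUnit]
    intro u v huv
    have h0 : S.mulVec (u - v) = 0 := by rw [Matrix.mulVec_sub, huv, sub_self]
    exact sub_eq_zero.mp (hSinj0 _ h0)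
  -- S S⁻¹ b = b
  have hSb : S.mulVec (S⁻¹.mulVec b) = b := by
    rw [Matrix.mulVec_mulVec, Matrix.mul_nonsing_inv _ hSunit, Matrix.one_mulVec]
  -- normal equation: M x* = Aᵀ b
  have hnormal : M.mulVec x₂star = Aᵀ.mulVec b := by
    rw [hx₂star, hMS, hSb]
  -- key quadratic expansion
  have hkey : ∀ x : Fin N → ℝ, f x = f x₂star
      + 1 / 2 * (A.mulVec (x - x₂star) ⬝ᵥ A.mulVec (x - x₂star))
      + lam₂ / 2 * (L₂.mulVec (x - x₂star) ⬝ᵥ L₂.mulVec (x - x₂star)) := by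
    intro x
    set r := b - A.mulVec x₂star with hr
    set q := A.mulVec (x - x₂star) with hq
    set s := L₂.mulVec x₂star with hs'
    set t := L₂.mulVec (x - x₂star) with ht'
    have hcross : (Aᵀ.mulVec b - M.mulVec x₂star) ⬝ᵥ (x - x₂star) = 0 := by
      rw [hnormal, sub_self, zero_dotProduct]
    have e3 : Aᵀ.mulVec b - M.mulVec x₂star
        = Aᵀ.mulVec r - lam₂ • (L₂ᵀ.mulVec s) := by
      rw [hr, Matrix.mulVec_sub, hM, Matrix.add_mulVec, Matrix.smul_mulVec,
        ← Matrix.mulVec_mulVec, hs', ← Matrix.mulVec_mulVec]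
      abel
    rw [e3, sub_dotProduct, smul_dotProduct, smul_eq_mul, hdp, hdpL] at hcross
    have hc2 : r ⬝ᵥ q = lam₂ * (s ⬝ᵥ t) := by
      rw [hq, ht']; linarith [hcross]
    have hAx : A.mulVec x = A.mulVec x₂star + q := by
      rw [hq, ← Matrix.mulVec_add]; congr 1; ring
    have hLx : L₂.mulVec x = s + t := by
      rw [hs', ht', ← Matrix.mulVec_add]; congr 1; ring
    rw [hf x, hf x₂star, hAx, hLx]
    have hbr : b - (A.mulVec x₂star + q) = r - q := by
      rw [hr, ← sub_sub]
    have h1 : (r - q) ⬝ᵥ (r - q) = r ⬝ᵥ r - 2 * (r ⬝ᵥ q) + q ⬝ᵥ q := by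
      simp only [sub_dotProduct, dotProduct_sub]
      rw [dotProduct_comm q r]; ring
    have h2 : (s + t) ⬝ᵥ (s + t) = s ⬝ᵥ s + 2 * (s ⬝ᵥ t) + t ⬝ᵥ t := by
      simp only [add_dotProduct, dotProduct_add]
      rw [dotProduct_comm t s]; ring
    rw [hbr, h1, h2, ← hr]
    linear_combination -hc2
  have hnn : ∀ x : Fin N → ℝ, f x₂star ≤ f x := by
    intro x
    rw [hkey x]
    have h1 := dp_self_nonneg (A.mulVec (x - x₂star))
    have h2 := dp_self_nonneg (L₂.mulVec (x - x₂star))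
    nlinarith
  refine ⟨hnn, ?_⟩
  intro x hx
  have h1 : f x ≤ f x₂star := hx x₂star
  have h2 := hkey x
  have hq := dp_self_nonneg (A.mulVec (x - x₂star))
  have ht := dp_self_nonneg (L₂.mulVec (x - x₂star))
  have hq0 : A.mulVec (x - x₂star) ⬝ᵥ A.mulVec (x - x₂star) = 0 := by nlinarith
  have ht0 : L₂.mulVec (x - x₂star) ⬝ᵥ L₂.mulVec (x - x₂star) = 0 := by nlinarith
  have hd0 : x - x₂star = 0 :=
    hker _ (dotProduct_self_eq_zero.mp hq0) (dotProduct_self_eq_zero.mp ht0)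
  exact sub_eq_zero.mp hd0
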